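/- arXiv:math/9808126 — 5 statements merged into one kernel-verified Lean document; each statement's English description precedes it below -/
import Mathlib

section
/- Let X be a set, f : X → X, and h : X → ℝ with h ≥ 1 satisfying condition (∗) with data r, M, c. For z ∈ X define N(z) ∈ ℕ ∪ {∞} to be the least N ≥ 1 with h(f^[N](z)) > M (and ∞ if no such N exists). Suppose h' ≥ 1 is another function comparable to h (i.e. h' < e·h and h < e'·h' pointwise for some e, e' > 1), satisfying (∗) with data r', M', c', with associated function N'. Then there exists a constant C such that N'(z) ≤ N(z) + C and N(z) ≤ N'(z) + C for all z ∈ X (with the convention ∞ + C = ∞). -/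
open scoped Classical

/-- `Nfun f h M z` is the least `N ≥ 1` with `h (f^[N] z) > M`, or `∞` if none exists. -/
noncomputable def Nfun {X : Type*} (f : X → X) (h : X → ℝ) (M : ℝ) (z : X) : ℕ∞ :=
  sInf {n : ℕ∞ | ∃ N : ℕ, 1 ≤ N ∧ M < h (f^[N] z) ∧ n = N}

/-!
Condition (∗) makes the height grow geometrically along every orbit once it exceeds `M`, so
a fixed number `k` of further iterations pushes it above any prescribed bound, in particular
above `e' * M'`, where comparability forces `h' > M'`. Hence `N' ≤ N + k`, and symmetrically.
-/

section Nfun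

variable {X : Type*} {f : X → X} {h : X → ℝ} {M : ℝ} {z : X}

lemma Nfun_le_of_lt {N : ℕ} (hN : 1 ≤ N) (hlt : M < h (f^[N] z)) : Nfun f h M z ≤ N :=
  sInf_le ⟨N, hN, hlt, rfl⟩

lemma exists_eq_Nfun_of_ne_top (hne : Nfun f h M z ≠ ⊤) :
    ∃ N : ℕ, 1 ≤ N ∧ M < h (f^[N] z) ∧ Nfun f h M z = N := by
  have hS : {n : ℕ∞ | ∃ N : ℕ, 1 ≤ N ∧ M < h (f^[N] z) ∧ n = N}.Nonempty := by
    rw [Set.nonempty_iff_ne_empty]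
    rintro hS
    exact hne (by rw [Nfun, hS, sInf_empty])
  exact csInf_mem hS

lemma Nfun_le_Nfun_add {h' : X → ℝ} {M' : ℝ} {k : ℕ}
    (hk : ∀ y, M < h y → M' < h' (f^[k] y)) (z : X) :
    Nfun f h' M' z ≤ Nfun f h M z + k := by
  rcases eq_or_ne (Nfun f h M z) ⊤ with htop | hne
  · simp [htop]
  obtain ⟨N, hN, hlt, hNfun⟩ := exists_eq_Nfun_of_ne_top hne
  have hescape : M' < h' (f^[k + N] z) := by
    rw [Function.iterate_add_apply]
    exact hk _ hlt
  calc Nfun f h' M' z ≤ ((k + N : ℕ) : ℕ∞) := Nfun_le_of_lt (by omega) hescape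
    _ = Nfun f h M z + k := by rw [hNfun]; push_cast; ring

end Nfun

section Expanding

variable {X : Type*} {f : X → X} {h : X → ℝ} {r : ℕ} {M c : ℝ}

lemma pow_mul_lt_iterate_of_expanding (hM : 0 < M) (hc : 1 < c)
    (hstar : ∀ y, M < h y → c * h y < h (f^[r] y)) {y : X} (hy : M < h y) (j : ℕ) :
    c ^ j * M < h (f^[j * r] y) := by
  induction j with
  | zero => simpa using hy
  | succ j ih =>
    have hM_le : M ≤ c ^ j * M := le_mul_of_one_le_left hM.le (one_le_pow₀ hc.le)
    calc c ^ (j + 1) * M = c * (c ^ j * M) := by ring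
      _ < c * h (f^[j * r] y) := mul_lt_mul_of_pos_left ih (by linarith)
      _ < h (f^[r] (f^[j * r] y)) := hstar _ (hM_le.trans_lt ih)
      _ = h (f^[(j + 1) * r] y) := by rw [← Function.iterate_add_apply, Nat.succ_mul, add_comm]

lemma exists_iterate_lt_of_expanding (hM : 0 < M) (hc : 1 < c)
    (hstar : ∀ y, M < h y → c * h y < h (f^[r] y)) (B : ℝ) :
    ∃ k : ℕ, ∀ y, M < h y → B < h (f^[k] y) := by
  obtain ⟨j, hj⟩ := pow_unbounded_of_one_lt (B / M) hc
  refine ⟨j * r, fun y hy => ?_⟩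
  calc B < c ^ j * M := (div_lt_iff₀ hM).mp hj
    _ < h (f^[j * r] y) := pow_mul_lt_iterate_of_expanding hM hc hstar hy j

lemma exists_Nfun_le_Nfun_add_of_expanding {h' : X → ℝ} {e' : ℝ} (he' : 0 < e')
    (hcomp' : ∀ y, h y < e' * h' y) (hM : 0 < M) (hc : 1 < c)
    (hstar : ∀ y, M < h y → c * h y < h (f^[r] y)) (M' : ℝ) :
    ∃ C : ℕ, ∀ z, Nfun f h' M' z ≤ Nfun f h M z + C := by
  obtain ⟨k, hk⟩ := exists_iterate_lt_of_expanding hM hc hstar (e' * M')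
  refine ⟨k, Nfun_le_Nfun_add fun y hy => ?_⟩
  have := (hk y hy).trans (hcomp' _)
  exact lt_of_mul_lt_mul_left this he'.le

end Expanding

theorem Nfun_comparable_general {X : Type*} (f : X → X) (h h' : X → ℝ)
    (e e' : ℝ) (he : 1 < e) (he' : 1 < e')
    (hcomp : ∀ z, h' z < e * h z) (hcomp' : ∀ z, h z < e' * h' z)
    (r : ℕ) (M : ℝ) (hM : 0 < M) (c : ℝ) (hc : 1 < c)
    (hstar : ∀ z, M < h z → c * h z < h (f^[r] z))
    (r' : ℕ) (M' : ℝ) (hM' : 0 < M') (c' : ℝ) (hc' : 1 < c')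
    (hstar' : ∀ z, M' < h' z → c' * h' z < h' (f^[r'] z)) :
    ∃ C : ℕ, ∀ z : X,
      Nfun f h' M' z ≤ Nfun f h M z + (C : ℕ∞) ∧
      Nfun f h M z ≤ Nfun f h' M' z + (C : ℕ∞) := by
  obtain ⟨C₁, hC₁⟩ :=
    exists_Nfun_le_Nfun_add_of_expanding (by linarith) hcomp' hM hc hstar M'
  obtain ⟨C₂, hC₂⟩ :=
    exists_Nfun_le_Nfun_add_of_expanding (by linarith) hcomp hM' hc' hstar' M
  refine ⟨max C₁ C₂, fun z => ⟨(hC₁ z).trans ?_, (hC₂ z).trans ?_⟩⟩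
  · gcongr; exact_mod_cast le_max_left C₁ C₂
  · gcongr; exact_mod_cast le_max_right C₁ C₂

/-- Part (2) of the Proposition: for comparable heights both satisfying (∗),
the `N`-functions differ by a bounded amount, so the notion of a sequence of
small points is independent of the choice of height. -/
theorem Nfun_comparable {X : Type*} (f : X → X) (h h' : X → ℝ)
    (hone : ∀ z, 1 ≤ h z) (h'one : ∀ z, 1 ≤ h' z)
    (e e' : ℝ) (he : 1 < e) (he' : 1 < e')
    (hcomp : ∀ z, h' z < e * h z) (hcomp' : ∀ z, h z < e' * h' z)
    (r : ℕ) (hr : 1 ≤ r) (M : ℝ) (hM : 0 < M) (c : ℝ) (hc : 1 < c)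
    (hstar : ∀ z, M < h z → c * h z < h (f^[r] z))
    (r' : ℕ) (hr' : 1 ≤ r') (M' : ℝ) (hM' : 0 < M') (c' : ℝ) (hc' : 1 < c')
    (hstar' : ∀ z, M' < h' z → c' * h' z < h' (f^[r'] z)) :
    ∃ C : ℕ, ∀ z : X,
      Nfun f h' M' z ≤ Nfun f h M z + (C : ℕ∞) ∧
      Nfun f h M z ≤ Nfun f h' M' z + (C : ℕ∞) :=
  Nfun_comparable_general f h h' e e' he he' hcomp hcomp' r M hM c hc hstar r' M' hM' c' hc' hstar'
end

section
/- Let X be a set and f, g : X → X commuting maps (f ∘ g = g ∘ f). Let h : X → ℝ with h ≥ 1, and suppose both (X, f) and (X, g) satisfy condition (∗) with respect to h with the same data r, M, c (so h(z) > M implies both h(f^[r](z)) > c·h(z) and h(g^[r](z)) > c·h(z)). Suppose moreover there is d > 1 with h(f(z)) < d·h(z) for all z. Let N_f(z) be the least N ≥ 1 with h(f^[N](z)) > M (∞ if none exists), and similarly N_g. Then N_g(z) ≤ ⌈log d / log c⌉ · r · N_f(z) for all z with N_f(z) < ∞. -/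
/-- Part (3) of the Proposition: for commuting maps `f, g` both satisfying (∗)
with the same data, `N_g` is bounded by a linear function of `N_f`. -/
theorem Nfun_commuting {X : Type*} (f g : X → X) (hfg : f ∘ g = g ∘ f)
    (h : X → ℝ) (hone : ∀ z, 1 ≤ h z)
    (r : ℕ) (hr : 1 ≤ r) (M : ℝ) (hM : 0 < M) (c : ℝ) (hc : 1 < c)
    (hstarf : ∀ z, M < h z → c * h z < h (f^[r] z))
    (hstarg : ∀ z, M < h z → c * h z < h (g^[r] z))
    (d : ℝ) (hd : 1 < d) (hlip : ∀ z, h (f z) < d * h z) :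
    ∀ z : X, Nfun f h M z ≠ ⊤ →
      Nfun g h M z ≤ ((⌈Real.log d / Real.log c⌉.toNat : ℕ∞)) * (r : ℕ∞) *
        Nfun f h M z := by
  intro z hz
  have hc0 : (0:ℝ) < c := lt_trans one_pos hc
  have hd0 : (0:ℝ) < d := lt_trans one_pos hd
  -- the defining set of `Nfun f h M z` is nonempty
  have hSne : {n : ℕ∞ | ∃ N : ℕ, 1 ≤ N ∧ M < h (f^[N] z) ∧ n = N}.Nonempty := by
    by_contra hne
    rw [Set.not_nonempty_iff_eq_empty] at hne
    exact hz (by rw [Nfun, hne, sInf_empty])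
  obtain ⟨η, hη1, hηM, hηeq⟩ := csInf_mem hSne
  have hfeq : Nfun f h M z = (η : ℕ∞) := hηeq
  -- growth of g-iterates
  have hgrow : ∀ (j : ℕ) (w : X), M < h w →
      M < h ((g^[r])^[j] w) ∧ c ^ j * h w ≤ h ((g^[r])^[j] w) := by
    intro j
    induction j with
    | zero => intro w hw; exact ⟨by simpa using hw, by simp⟩
    | succ j ih =>
      intro w hw
      obtain ⟨h1, h2⟩ := ih w hw
      have h3 := hstarg _ h1
      have hpos : (0:ℝ) < h ((g^[r])^[j] w) := lt_of_lt_of_le one_pos (hone _)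
      rw [Function.iterate_succ_apply']
      constructor
      · have : h ((g^[r])^[j] w) ≤ c * h ((g^[r])^[j] w) :=
          le_mul_of_one_le_left hpos.le hc.le
        linarith
      · calc c ^ (j+1) * h w = c * (c ^ j * h w) := by ring
          _ ≤ c * h ((g^[r])^[j] w) := mul_le_mul_of_nonneg_left h2 hc0.le
          _ ≤ h (g^[r] ((g^[r])^[j] w)) := h3.le
  -- lipschitz growth of f-iterates
  have hlipn : ∀ (n : ℕ) (w : X), h (f^[n] w) ≤ d ^ n * h w := by
    intro n
    induction n with
    | zero => intro w; simp
    | succ n ih =>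
      intro w
      rw [Function.iterate_succ_apply']
      have h1 := (hlip (f^[n] w)).le
      have h2 := ih w
      calc h (f (f^[n] w)) ≤ d * h (f^[n] w) := h1
        _ ≤ d * (d ^ n * h w) := by nlinarith
        _ = d ^ (n+1) * h w := by ring
  -- commuting iterates
  have hcomm : Function.Commute f g := fun x => congrFun hfg x
  set k := (⌈Real.log d / Real.log c⌉).toNat with hk
  have hlogc : 0 < Real.log c := Real.log_pos hc
  have hlogd : 0 < Real.log d := Real.log_pos hd
  have hx : (0:ℝ) < Real.log d / Real.log c := div_pos hlogd hlogc
  have hceil0 : (0:ℤ) < ⌈Real.log d / Real.log c⌉ := Int.ceil_pos.mpr hx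
  have hk1 : 1 ≤ k := by
    rw [hk]; omega
  have hkk : Real.log d / Real.log c ≤ (k : ℝ) := by
    calc Real.log d / Real.log c ≤ ((⌈Real.log d / Real.log c⌉ : ℤ) : ℝ) := Int.le_ceil _
      _ = (k : ℝ) := by exact_mod_cast congrArg (Int.cast : ℤ → ℝ) (Int.toNat_of_nonneg hceil0.le).symm
  have hcd : d ≤ c ^ k := by
    have hlog : Real.log d ≤ (k : ℝ) * Real.log c := by
      rw [div_le_iff₀ hlogc] at hkk; linarith
    calc d = Real.exp (Real.log d) := (Real.exp_log hd0).symm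
      _ ≤ Real.exp ((k:ℝ) * Real.log c) := Real.exp_le_exp.mpr hlog
      _ = c ^ k := by rw [← Real.log_pow, Real.exp_log (pow_pos hc0 k)]
  have hdc : d ^ η ≤ c ^ (k * η) := by
    rw [pow_mul]
    exact pow_le_pow_left₀ hd0.le hcd η
  set N : ℕ := r * (k * η) with hNdef
  -- main estimate: M < h (g^[N] z)
  have hgM : M < h (g^[N] z) := by
    obtain ⟨hA, hB⟩ := hgrow (k * η) (f^[η] z) hηM
    have hiter : (g^[r])^[k*η] (f^[η] z) = g^[N] (f^[η] z) :=
      congrFun (Function.iterate_mul g r (k*η)).symm _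
    have hswap : g^[N] (f^[η] z) = f^[η] (g^[N] z) :=
      ((hcomm.iterate_left η).iterate_right N).eq z |>.symm
    have hup : h (f^[η] (g^[N] z)) ≤ d ^ η * h (g^[N] z) := hlipn η _
    have hz0 : (0:ℝ) < h (f^[η] z) := lt_of_lt_of_le one_pos (hone _)
    have key : d ^ η * h (f^[η] z) ≤ d ^ η * h (g^[N] z) := by
      calc d ^ η * h (f^[η] z) ≤ c ^ (k*η) * h (f^[η] z) :=
            mul_le_mul_of_nonneg_right hdc hz0.le
        _ ≤ h ((g^[r])^[k*η] (f^[η] z)) := hB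
        _ = h (f^[η] (g^[N] z)) := by rw [hiter, hswap]
        _ ≤ d ^ η * h (g^[N] z) := hup
    have hdη : (0:ℝ) < d ^ η := pow_pos hd0 η
    have : h (f^[η] z) ≤ h (g^[N] z) := le_of_mul_le_mul_left key hdη
    linarith
  have hN1 : 1 ≤ N := by
    rw [hNdef]
    exact Nat.one_le_iff_ne_zero.mpr (by positivity)
  have hmem : (N : ℕ∞) ∈ {n : ℕ∞ | ∃ N' : ℕ, 1 ≤ N' ∧ M < h (g^[N'] z) ∧ n = N'} :=
    ⟨N, hN1, hgM, rfl⟩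
  calc Nfun g h M z ≤ (N : ℕ∞) := sInf_le hmem
    _ = ((k : ℕ∞)) * (r : ℕ∞) * (η : ℕ∞) := by
        rw [hNdef]; push_cast; ring
    _ = _ := by rw [hfeq]
end

section
/- Let X, X' be sets, f : X → X, f' : X' → X', and ψ : X → X' with ψ ∘ f = f' ∘ ψ. Let h : X → ℝ and h' : X' → ℝ, both ≥ 1, with (X, f) satisfying (∗) for h (data r, M, c) and (X', f') satisfying (∗) for h' (data r', M', c'). Suppose there is α > 1 with h'(ψ(z)) < α·h(z) for all z, and that M' > α·M. Then N'(ψ(z)) ≥ N(z) for all z ∈ X, where N(z) (resp. N'(w)) is the least N ≥ 1 with h(f^[N](z)) > M (resp. h'(f'^[N](w)) > M'), and ∞ if none exists. Consequently, if (z_i) is a sequence in X with N(z_i) → ∞, then N'(ψ(z_i)) → ∞. -/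
open Filter

/-- Part (4) of the Proposition: an equivariant map `ψ` with `h'(ψ z) < α·h z`
and `M' > α·M` satisfies `N'(ψ z) ≥ N(z)`; consequently `ψ` sends sequences of
small points to sequences of small points. -/
theorem Nfun_equivariant {X X' : Type*} (f : X → X) (f' : X' → X') (ψ : X → X')
    (hψ : ψ ∘ f = f' ∘ ψ)
    (h : X → ℝ) (h' : X' → ℝ) (hone : ∀ z, 1 ≤ h z) (h'one : ∀ w, 1 ≤ h' w)
    (r : ℕ) (hr : 1 ≤ r) (M : ℝ) (hM : 0 < M) (c : ℝ) (hc : 1 < c)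
    (hstar : ∀ z, M < h z → c * h z < h (f^[r] z))
    (r' : ℕ) (hr' : 1 ≤ r') (M' : ℝ) (hM' : 0 < M') (c' : ℝ) (hc' : 1 < c')
    (hstar' : ∀ w, M' < h' w → c' * h' w < h' (f'^[r'] w))
    (α : ℝ) (hα : 1 < α) (hαh : ∀ z, h' (ψ z) < α * h z) (hMM' : α * M < M') :
    (∀ z : X, Nfun f h M z ≤ Nfun f' h' M' (ψ z)) ∧
    (∀ z : ℕ → X,
      Tendsto (fun i => Nfun f h M (z i)) atTop (nhds ⊤) →
      Tendsto (fun i => Nfun f' h' M' (ψ (z i))) atTop (nhds ⊤)) := by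
  have key : ∀ z : X, Nfun f h M z ≤ Nfun f' h' M' (ψ z) := by
    intro z
    apply sInf_le_sInf
    rintro n ⟨N, hN1, hNM, rfl⟩
    refine ⟨N, hN1, ?_, rfl⟩
    have hcomm : f'^[N] (ψ z) = ψ (f^[N] z) := by
      have := Function.Semiconj.iterate_right (f := ψ) (by
        intro x; exact congrFun hψ x) N
      exact (this z).symm
    rw [hcomm] at hNM
    have h1 : α * M < α * h (f^[N] z) := lt_trans (lt_trans hMM' hNM) (hαh _)
    exact lt_of_mul_lt_mul_left h1 (by linarith)
  refine ⟨key, fun z hz => ?_⟩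
  exact tendsto_nhds_top_mono hz (Eventually.of_forall fun i => key (z i))
end

section
/- Let X be a set, f : X → X, and h : X → ℝ with h ≥ 1, satisfying condition (∗) with data r, M, c (c > 1). If z ∈ X is periodic for f (i.e. f^[p](z) = z for some p ≥ 1), then h(f^[n](z)) ≤ M for all n ≥ 0; in particular h(z) ≤ M. -/
/-- A periodic point of a map satisfying (∗) has all its iterates of height
at most `M`; in particular `h z ≤ M`. -/
theorem periodic_height_le {X : Type*} (f : X → X) (h : X → ℝ)
    (hone : ∀ z, 1 ≤ h z) (r : ℕ) (hr : 1 ≤ r) (M : ℝ) (hM : 0 < M)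
    (c : ℝ) (hc : 1 < c)
    (hstar : ∀ z, M < h z → c * h z < h (f^[r] z))
    (z : X) (p : ℕ) (hp : 1 ≤ p) (hper : f^[p] z = z) :
    (∀ n : ℕ, h (f^[n] z) ≤ M) ∧ h z ≤ M := by
  have hp0 : 0 < p := hp
  -- every iterate equals one of the first p iterates
  have hmod : ∀ m : ℕ, f^[m] z = f^[m % p] z := by
    intro m
    have : ∀ q : ℕ, f^[p * q] z = z := by
      intro q
      induction q with
      | zero => simp
      | succ q ih =>
        rw [Nat.mul_succ, Function.iterate_add_apply, hper, ih]
    conv_lhs => rw [← Nat.mod_add_div m p, Function.iterate_add_apply, this]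
  -- bound on the orbit
  set B : ℝ := (Finset.range p).sup' (Finset.nonempty_range_iff.mpr hp0.ne') (fun i => h (f^[i] z)) with hB
  have hbound : ∀ m : ℕ, h (f^[m] z) ≤ B := by
    intro m
    rw [hmod m]
    exact Finset.le_sup' (fun i => h (f^[i] z)) (Finset.mem_range.mpr (Nat.mod_lt m hp0))
  have key : ∀ n : ℕ, h (f^[n] z) ≤ M := by
    intro n
    by_contra hn
    push_neg at hn
    have grow : ∀ k : ℕ, c ^ k * h (f^[n] z) ≤ h (f^[n + k * r] z) := by
      intro k
      induction k with
      | zero => simp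
      | succ k ih =>
        have hpos : M < h (f^[n + k * r] z) :=
          lt_of_lt_of_le (lt_of_lt_of_le hn (le_mul_of_one_le_left
            (le_trans zero_le_one (hone _)) (one_le_pow₀ hc.le))) ih
        have hs := hstar _ hpos
        rw [← Function.iterate_add_apply] at hs
        have : c ^ (k + 1) * h (f^[n] z) ≤ c * h (f^[n + k * r] z) := by
          rw [pow_succ, mul_comm (c ^ k) c, mul_assoc]
          exact mul_le_mul_of_nonneg_left ih (by linarith)
        have hlt : c ^ (k + 1) * h (f^[n] z) < h (f^[n + (k + 1) * r] z) :=
          calc c ^ (k + 1) * h (f^[n] z) ≤ c * h (f^[n + k * r] z) := this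
          _ < h (f^[r + (n + k * r)] z) := hs
          _ = h (f^[n + (k + 1) * r] z) := by ring_nf
        exact hlt.le
      -- contradiction with bound B
    obtain ⟨k, hk⟩ := pow_unbounded_of_one_lt B hc
    have h1 : c ^ k ≤ c ^ k * h (f^[n] z) :=
      le_mul_of_one_le_right (by positivity) (hone _)
    have := (grow k).trans_lt' (hk.trans_le h1)
    exact absurd (hbound (n + k * r)) (not_le.mpr this)
  refine ⟨key, ?_⟩
  simpa using key 0
end

section
/- Let X be a set, f : X → X, and h : X → ℝ with h ≥ 1, satisfying condition (∗) with data r, M, c. If z ∈ X is preperiodic for f (its forward orbit {f^[n](z) : n ≥ 0} is finite), then N(z) = ∞, where N(z) is the least N ≥ 1 with h(f^[N](z)) > M (∞ if none exists). Conversely, if h has the Northcott property that {w ∈ X : h(w) ≤ M} is finite, then N(z) = ∞ implies z is preperiodic for f. -/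
/-- Preperiodic points have `N(z) = ∞`; conversely, under the Northcott
property, `N(z) = ∞` implies `z` is preperiodic. -/
theorem preperiodic_iff_Nfun_top {X : Type*} (f : X → X) (h : X → ℝ)
    (hone : ∀ z, 1 ≤ h z) (r : ℕ) (hr : 1 ≤ r) (M : ℝ) (hM : 0 < M)
    (c : ℝ) (hc : 1 < c)
    (hstar : ∀ z, M < h z → c * h z < h (f^[r] z)) :
    (∀ z : X, {w | ∃ n : ℕ, f^[n] z = w}.Finite → Nfun f h M z = ⊤) ∧
    ({w : X | h w ≤ M}.Finite →
      ∀ z : X, Nfun f h M z = ⊤ → {w | ∃ n : ℕ, f^[n] z = w}.Finite) := by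
  constructor
  · intro z hfin
    by_contra hne
    have hS : {n : ℕ∞ | ∃ N : ℕ, 1 ≤ N ∧ M < h (f^[N] z) ∧ n = N}.Nonempty := by
      by_contra hS
      rw [Set.not_nonempty_iff_eq_empty] at hS
      exact hne (by rw [Nfun, hS, sInf_empty])
    obtain ⟨_, N, hN1, hNM, rfl⟩ := hS
    set g : ℕ → X := fun k => f^[N + k * r] z with hg
    have hstep : ∀ k, f^[r] (g k) = g (k + 1) := by
      intro k
      simp only [hg, ← Function.iterate_add_apply]
      ring_nf
    have hmem : ∀ k, M < h (g k) := by
      intro k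
      induction k with
      | zero => simpa [hg] using hNM
      | succ k ih =>
        have h1 := hstar _ ih
        rw [hstep k] at h1
        have h2 : M < c * h (g k) := by nlinarith
        linarith
    have hmono : StrictMono fun k => h (g k) := by
      apply strictMono_nat_of_lt_succ
      intro k
      have h1 := hstar _ (hmem k)
      rw [hstep k] at h1
      have hpos : 0 < h (g k) := lt_trans hM (hmem k)
      nlinarith
    have hinj : Function.Injective g := fun a b hab => by
      have : h (g a) = h (g b) := by rw [hab]
      exact hmono.injective this
    have hinf : {w | ∃ n : ℕ, f^[n] z = w}.Infinite :=
      Set.infinite_of_injective_forall_mem (f := g) hinj (fun k => ⟨N + k * r, rfl⟩)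
    exact hinf hfin
  · intro hNor z htop
    have hle : ∀ N : ℕ, 1 ≤ N → h (f^[N] z) ≤ M := by
      intro N hN
      by_contra hgt
      push_neg at hgt
      have hmem : (N : ℕ∞) ∈ {n : ℕ∞ | ∃ N' : ℕ, 1 ≤ N' ∧ M < h (f^[N'] z) ∧ n = N'} :=
        ⟨N, hN, hgt, rfl⟩
      have h1 : Nfun f h M z ≤ (N : ℕ∞) := sInf_le hmem
      rw [htop] at h1
      exact (ENat.coe_lt_top N).not_ge h1
    have hsub : {w | ∃ n : ℕ, f^[n] z = w} ⊆ insert z {w : X | h w ≤ M} := by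
      rintro w ⟨n, rfl⟩
      cases n with
      | zero => left; rfl
      | succ n => exact Or.inr (hle (n + 1) (by omega))
    exact (hNor.insert z).subset hsub
end
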